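/- Suppose Algorithm 1 is run on an on-line bipartite graph G. Let v be a vertex of G considered at the moment of its presentation, let i ≥ 1, and let x and y be two vertices from opposite sides of C_i[v] both colored a_i. Then x and y lie in different connected components of C_i(v). -/
import Mathlib


/-! ### Algorithm 1 -/

/-- The three palettes of colors `a_i`, `b_i`, `c_i` used by Algorithm 1. -/
inductive PalColor : Type
  | a : ℕ → PalColor
  | b : ℕ → PalColor
  | c : ℕ → PalColor
  deriving DecidableEq

/-- The index of a color. -/
def PalColor.index : PalColor → ℕ
  | a i => i
  | b i => i
  | c i => i

/-- A vertex `u` has color index `j` when its color is `a_j` or `b_j`. -/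
def hasColorIndex (col : ℕ → PalColor) (u j : ℕ) : Prop :=
  col u = PalColor.a j ∨ col u = PalColor.b j

/-- Vertex set of `G_i[u]` at time `t` (vertices are presented in the order `0, 1, 2, …`):
the vertices presented before time `t` whose color has index between `1` and `i`,
together with `u`. -/
def domSet (col : ℕ → PalColor) (t i u : ℕ) : Set ℕ :=
  {w | (w < t ∧ 1 ≤ (col w).index ∧ (col w).index ≤ i) ∨ w = u}

/-- `x` and `y` are connected within the subgraph of `G` induced on `S`. -/
def ReachIn (G : SimpleGraph ℕ) (S : Set ℕ) (x y : ℕ) : Prop :=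
  ∃ (hx : x ∈ S) (hy : y ∈ S), (G.induce S).Reachable ⟨x, hx⟩ ⟨y, hy⟩

/-- `x` and `y` are joined by a walk of even length within the subgraph of `G` induced on `S`;
in a bipartite graph this says exactly that `x` and `y` are on the same side of their
(common) connected component. -/
def EvenReachIn (G : SimpleGraph ℕ) (S : Set ℕ) (x y : ℕ) : Prop :=
  ∃ (hx : x ∈ S) (hy : y ∈ S) (p : (G.induce S).Walk ⟨x, hx⟩ ⟨y, hy⟩), Even p.length

/-- `C_i[u]` at time `t`: the connected component of `u` in the subgraph induced on
`domSet col t i u`. -/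
def comp (G : SimpleGraph ℕ) (col : ℕ → PalColor) (t i u : ℕ) : Set ℕ :=
  {w | ReachIn G (domSet col t i u) u w}

/-- `C_i^y(u)` at time `t`: the connected component of `y` in `C_i(u) = C_i[u] \ {u}`. -/
def compMinus (G : SimpleGraph ℕ) (col : ℕ → PalColor) (t i u y : ℕ) : Set ℕ :=
  {w | ReachIn G (domSet col t i u \ {u}) y w}

/-- Color `a_i` is mixed in `C_i[t]` at time `t`: vertices on both sides of `C_i[t]`
have color `a_i`. -/
def MixedA (G : SimpleGraph ℕ) (col : ℕ → PalColor) (t i : ℕ) : Prop :=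
  ∃ x ∈ comp G col t i t, ∃ y ∈ comp G col t i t,
    col x = PalColor.a i ∧ col y = PalColor.a i ∧
    ¬ EvenReachIn G (domSet col t i t) x y

/-- `m = max {i ≥ 1 | a_i is mixed in C_i[t]} + 1` (with `max ∅ = 0`). -/
noncomputable def mIdx (G : SimpleGraph ℕ) (col : ℕ → PalColor) (t : ℕ) : ℕ :=
  sSup {i | 1 ≤ i ∧ MixedA G col t i} + 1

/-- `u'` is universal to `C_{j-1}[u]` (at time `t`): `u'` is adjacent to all vertices in one of
the two sides of `C_{j-1}[u]`. -/
def UnivTo (G : SimpleGraph ℕ) (col : ℕ → PalColor) (t j u u' : ℕ) : Prop :=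
  (∀ x ∈ comp G col t (j-1) u, EvenReachIn G (domSet col t (j-1) u) u x → G.Adj u' x) ∨
  (∀ x ∈ comp G col t (j-1) u, ¬ EvenReachIn G (domSet col t (j-1) u) u x → G.Adj u' x)

open Classical in
/-- One step of Algorithm 1: the color given to the vertex presented at time `t`, assuming that
`col` records the colors of the previously presented vertices `0, …, t-1`. -/
noncomputable def step (G : SimpleGraph ℕ) (col : ℕ → PalColor) (t : ℕ) : PalColor :=
  let m := mIdx G col t
  let S := domSet col t m t
  let C := comp G col t m t
  let I1 : Set ℕ := {x ∈ C | EvenReachIn G S t x}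
  let I2 : Set ℕ := {x ∈ C | ¬ EvenReachIn G S t x}
  if ∃ u ∈ I2, col u = PalColor.a m then PalColor.b m
  else if ∃ u ∈ I2, col u = PalColor.c m then PalColor.a m
  else if ∃ u ∈ I1 ∪ I2, ∃ u' ∈ I2, ∃ j : ℕ, hasColorIndex col u j ∧
      ((m : ℝ) - Real.sqrt (2 * m) + 2 ≤ (j : ℝ)) ∧ UnivTo G col t j u u'
    then PalColor.c m
  else PalColor.a m

/-- The colors of the first `k` presented vertices under Algorithm 1 (junk elsewhere). -/
noncomputable def algoColAux (G : SimpleGraph ℕ) : ℕ → ℕ → PalColor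
  | 0 => fun _ => PalColor.a 0
  | (k+1) => fun w => if w = k then step G (algoColAux G k) k else algoColAux G k w

/-- `algoCol G v` is the color that Algorithm 1 assigns to vertex `v` when the on-line graph `G`
is presented in the vertex order `0, 1, 2, …`. -/
noncomputable def algoCol (G : SimpleGraph ℕ) (v : ℕ) : PalColor :=
  algoColAux G (v + 1) v

/-- The on-line graph on `ℕ` obtained by presenting the vertices of `G` in the order given by
the enumeration `π` (vertices `≥ n` are isolated). -/
def toNatGraph {V : Type*} (G : SimpleGraph V) {n : ℕ} (π : Fin n ≃ V) : SimpleGraph ℕ :=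
  SimpleGraph.fromRel (fun i j => ∃ (hi : i < n) (hj : j < n), G.Adj (π ⟨i, hi⟩) (π ⟨j, hj⟩))


/-! ### Auxiliary lemmas -/

lemma algoColAux_of_le (G : SimpleGraph ℕ) {t w : ℕ} (h : t ≤ w) :
    algoColAux G t w = PalColor.a 0 := by
  induction t with
  | zero => rfl
  | succ k ih =>
    simp only [algoColAux]
    rw [if_neg (by omega)]
    exact ih (by omega)

lemma algoColAux_eq_algoCol (G : SimpleGraph ℕ) {t w : ℕ} (h : w < t) :
    algoColAux G t w = algoCol G w := by
  induction t with
  | zero => omega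
  | succ k ih =>
    simp only [algoColAux]
    by_cases hw : w = k
    · subst hw; rw [if_pos rfl]; simp [algoCol, algoColAux]
    · rw [if_neg hw]; exact ih (by omega)

lemma algoCol_eq_step (G : SimpleGraph ℕ) (w : ℕ) :
    algoCol G w = step G (algoColAux G w) w := by
  simp [algoCol, algoColAux]

lemma step_index (G : SimpleGraph ℕ) (col : ℕ → PalColor) (t : ℕ) :
    (step G col t).index = mIdx G col t := by
  simp only [step]
  split_ifs <;> rfl

lemma reachIn_of_walk {G : SimpleGraph ℕ} {S : Set ℕ} {x y : ℕ}
    (q : G.Walk x y) (h : ∀ z ∈ q.support, z ∈ S) : ReachIn G S x y := by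
  induction q with
  | nil =>
    rename_i u
    have hx : u ∈ S := h u (by simp)
    exact ⟨hx, hx, SimpleGraph.Reachable.refl _⟩
  | @cons a' c' b' hadj q ih =>
    have ha : a' ∈ S := h a' (by simp)
    have hc : c' ∈ S := h c' (by simp [SimpleGraph.Walk.support_cons])
    obtain ⟨hc', hb', hr⟩ := ih (fun z hz => h z (by simp [SimpleGraph.Walk.support_cons, hz]))
    refine ⟨ha, hb', SimpleGraph.Reachable.trans ?_ hr⟩
    exact SimpleGraph.Adj.reachable (by simpa using hadj)

lemma walk_down {G : SimpleGraph ℕ} {S : Set ℕ} :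
    ∀ {a b : S}, (G.induce S).Walk a b →
      ∃ q : G.Walk a b, ∀ z ∈ q.support, z ∈ S := by
  intro a b p
  induction p with
  | nil =>
    exact ⟨SimpleGraph.Walk.nil, by
      rintro z hz; simp at hz; subst hz; exact Subtype.coe_prop _⟩
  | @cons a' c' b' hadj p ih =>
    obtain ⟨q, hq⟩ := ih
    refine ⟨SimpleGraph.Walk.cons (by simpa using hadj) q, ?_⟩
    intro z hz
    rcases (by simpa [SimpleGraph.Walk.support_cons] using hz : z = ↑a' ∨ z ∈ q.support) with h | h
    · subst h; exact a'.2
    · exact hq z h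

lemma exists_walk_of_reachIn {G : SimpleGraph ℕ} {S : Set ℕ} {x y : ℕ}
    (h : ReachIn G S x y) : ∃ q : G.Walk x y, ∀ z ∈ q.support, z ∈ S := by
  obtain ⟨hx, hy, hr⟩ := h
  obtain ⟨p⟩ := hr
  exact walk_down p

lemma walk_parity {G : SimpleGraph ℕ} {side : ℕ → Bool}
    (hside : ∀ x y, G.Adj x y → side x ≠ side y) {S : Set ℕ} :
    ∀ {a b : S} (p : (G.induce S).Walk a b),
      (Even p.length ↔ side (a : ℕ) = side (b : ℕ)) := by
  intro a b p
  induction p with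
  | nil => simp
  | @cons a' c' b' hadj p ih =>
    have h1 : side (a' : ℕ) ≠ side (c' : ℕ) := hside _ _ (by simpa using hadj)
    simp only [SimpleGraph.Walk.length_cons, Nat.even_add_one, ih]
    revert h1
    cases (side (a' : ℕ)) <;> cases (side (b' : ℕ)) <;> cases (side (c' : ℕ)) <;> simp

lemma not_evenReachIn {G : SimpleGraph ℕ} {side : ℕ → Bool}
    (hside : ∀ x y, G.Adj x y → side x ≠ side y) {S : Set ℕ} {x y : ℕ}
    (h : side x ≠ side y) : ¬ EvenReachIn G S x y := by
  rintro ⟨hx, hy, p, hp⟩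
  exact h ((walk_parity hside p).1 hp)

lemma mIdx_gt_of_mixed (G : SimpleGraph ℕ) (w i : ℕ) (hi : 1 ≤ i)
    (hmix : MixedA G (algoColAux G w) w i) : i < mIdx G (algoColAux G w) w := by
  have hbdd : BddAbove {j | 1 ≤ j ∧ MixedA G (algoColAux G w) w j} := by
    refine ⟨(Finset.range w).sup (fun z => ((algoColAux G w) z).index), ?_⟩
    rintro j ⟨hj1, xx, hxxc, yy, hyyc, hcx, hcy, hne⟩
    obtain ⟨-, hxxS, -⟩ := hxxc
    rcases hxxS with ⟨hlt, -, -⟩ | heq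
    · have : ((algoColAux G w) xx).index = j := by rw [hcx]; rfl
      calc j = ((algoColAux G w) xx).index := this.symm
        _ ≤ _ := Finset.le_sup (f := fun z => ((algoColAux G w) z).index) (Finset.mem_range.2 hlt)
    · exfalso
      rw [heq, algoColAux_of_le G le_rfl] at hcx
      exact absurd (PalColor.a.inj hcx) (by omega)
  have hle : i ≤ sSup {j | 1 ≤ j ∧ MixedA G (algoColAux G w) w j} :=
    le_csSup hbdd ⟨hi, hmix⟩
  unfold mIdx
  omega

lemma endpoint_case (G : SimpleGraph ℕ) (i w y : ℕ)
    (hy : y ∈ comp G (algoColAux G w) w i w)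
    (hcy : algoColAux G w y = PalColor.a i)
    (hne : ¬ EvenReachIn G (domSet (algoColAux G w) w i w) w y)
    (hcw : algoCol G w = PalColor.a i) : False := by
  have hstep : step G (algoColAux G w) w = PalColor.a i :=
    (algoCol_eq_step G w) ▸ hcw
  have hm : mIdx G (algoColAux G w) w = i := by
    have h := step_index G (algoColAux G w) w
    rw [hstep] at h
    exact h.symm
  simp only [step] at hstep
  rw [hm] at hstep
  split_ifs at hstep with h1 h2 h3
  all_goals exact h1 ⟨y, ⟨hy, hne⟩, hcy⟩

theorem stmt6 (G : SimpleGraph ℕ) (n : ℕ) (hfin : ∀ i j, G.Adj i j → i < n ∧ j < n)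
    (side : ℕ → Bool) (hside : ∀ x y, G.Adj x y → side x ≠ side y)
    (v : ℕ) (hv : v < n) (i : ℕ) (hi : 1 ≤ i) (x y : ℕ) (hxv : x ≠ v) (hyv : y ≠ v)
    (hx : x ∈ comp G (algoCol G) v i v) (hy : y ∈ comp G (algoCol G) v i v)
    (hxa : algoCol G x = PalColor.a i) (hya : algoCol G y = PalColor.a i)
    (hopp : side x ≠ side y) :
    ¬ ReachIn G (domSet (algoCol G) v i v \ {v}) x y := by
  intro hreach
  obtain ⟨q, hq⟩ := exists_walk_of_reachIn hreach
  have hxsup : x ∈ q.support := q.start_mem_support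
  have hysup : y ∈ q.support := q.end_mem_support
  obtain ⟨w, hwsup, hle⟩ : ∃ w ∈ q.support, ∀ z ∈ q.support, z ≤ w := by
    have hne : q.support.toFinset.Nonempty := ⟨x, List.mem_toFinset.2 hxsup⟩
    exact ⟨q.support.toFinset.max' hne,
      List.mem_toFinset.1 (q.support.toFinset.max'_mem hne),
      fun z hz => Finset.le_max' _ z (List.mem_toFinset.2 hz)⟩
  have hfrozen : ∀ z ∈ q.support, z ≠ w → algoColAux G w z = algoCol G z ∧ z < w := by
    intro z hz hzw
    have hlt : z < w := lt_of_le_of_ne (hle z hz) hzw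
    exact ⟨algoColAux_eq_algoCol G hlt, hlt⟩
  have hdom : ∀ z ∈ q.support, z ∈ domSet (algoColAux G w) w i w := by
    intro z hz
    by_cases hzw : z = w
    · exact Or.inr hzw
    · obtain ⟨hf, hlt⟩ := hfrozen z hz hzw
      obtain ⟨hmd, hzv⟩ := hq z hz
      rcases hmd with ⟨-, hidx1, hidx2⟩ | h
      · exact Or.inl ⟨hlt, by rw [hf]; exact hidx1, by rw [hf]; exact hidx2⟩
      · exact absurd (by simpa using h) hzv
  have hxc : x ∈ comp G (algoColAux G w) w i w := by
    refine reachIn_of_walk (q.takeUntil w hwsup).reverse (fun z hz => hdom z ?_)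
    rw [SimpleGraph.Walk.support_reverse, List.mem_reverse] at hz
    exact q.support_takeUntil_subset hwsup hz
  have hyc : y ∈ comp G (algoColAux G w) w i w :=
    reachIn_of_walk (q.dropUntil w hwsup) (fun z hz => hdom z (q.support_dropUntil_subset hwsup hz))
  by_cases hxw : x = w
  · subst hxw
    have hyx : y ≠ x := fun h => hopp (by rw [h])
    exact endpoint_case G i x y hyc ((hfrozen y hysup hyx).1.trans hya)
      (not_evenReachIn hside hopp) hxa
  by_cases hyw : y = w
  · subst hyw
    exact endpoint_case G i y x hxc ((hfrozen x hxsup hxw).1.trans hxa)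
      (not_evenReachIn hside hopp.symm) hya
  have hmix : MixedA G (algoColAux G w) w i :=
    ⟨x, hxc, y, hyc, (hfrozen x hxsup hxw).1.trans hxa, (hfrozen y hysup hyw).1.trans hya,
      not_evenReachIn hside hopp⟩
  have hml := mIdx_gt_of_mixed G w i hi hmix
  have hidx : (algoCol G w).index = mIdx G (algoColAux G w) w := by
    rw [algoCol_eq_step]; exact step_index G (algoColAux G w) w
  obtain ⟨hmd, hzv⟩ := hq w hwsup
  rcases hmd with ⟨-, -, hle2⟩ | h
  · rw [hidx] at hle2; omega
  · exact hzv (by simpa using h)
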